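/- Fix k ≥ 3, and for each n ≥ 2 let p = p(n) ∈ (0,1). Suppose there exists an integer M ≥ 1 such that, as n → ∞: (i) (2n−1)^{(M+1)l_k + L_k} · p^M → 0; (ii) (2n−1)^{2l_k + M·L_k} · p^M → 0; (iii) (2n−1)^{(2M+1)l_k + M·L_k} · p^{2M} → 0; (iv) (2n−1)^{3M·l_k + L_k} · p^{2M} → 0; and (v) (2n−1)^{(M+1)l_k + 2M·L_k} · p^{2M} → 0. Let R be the random subset of the set C(n,k) of cyclically reduced words of length k in F_n obtained by including each word independently with probability p(n), and let Σ_1, Σ_2, Σ_3 be the associated multigraphs. Then the probability that, for each i = 1, 2, 3, no two vertices of Σ_i are joined by M or more edges, and no vertex of Σ_i is joined by two or more edges to more than M distinct other vertices, tends to 1 as n → ∞. -/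

import Mathlib

open Filter

/-- A letter in the alphabet `{a₁^{±1}, …, a_n^{±1}}`. -/
abbrev Letter (n : ℕ) := Fin n × Bool

/-- A list of letters is reduced if no letter is followed by its inverse. -/
def IsRedList {n : ℕ} (w : List (Letter n)) : Prop :=
  w.IsChain fun a b => b ≠ (a.1, !a.2)

instance {n : ℕ} (w : List (Letter n)) : Decidable (IsRedList w) := by
  unfold IsRedList; infer_instance

/-- A list of letters is cyclically reduced if moreover its first letter is not the inverse of
its last letter. -/
def IsCycList {n : ℕ} (w : List (Letter n)) : Prop :=
  ∀ a ∈ w.head?, ∀ b ∈ w.getLast?, a ≠ (b.1, !b.2)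

instance {n : ℕ} (w : List (Letter n)) : Decidable (IsCycList w) := by
  unfold IsCycList; infer_instance

/-- `CWord n k`: cyclically reduced words of length `k` in the free group on `n` generators. -/
def CWord (n k : ℕ) :=
  {w : List.Vector (Letter n) k // IsRedList w.toList ∧ IsCycList w.toList}

instance (n k : ℕ) : DecidableEq (CWord n k) := by unfold CWord; infer_instance
instance (n k : ℕ) : Fintype (CWord n k) := by unfold CWord; exact Subtype.fintype _

/-- The inverse of a word: reverse the word and invert each letter. -/
def linv {n : ℕ} (w : List (Letter n)) : List (Letter n) :=
  w.reverse.map fun a => (a.1, !a.2)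

/-- `l_k` from the paper: `k/3`, `(k-1)/3`, `(k+1)/3` according to `k mod 3 = 0, 1, 2`. -/
def lk (k : ℕ) : ℕ :=
  if k % 3 = 0 then k / 3 else if k % 3 = 1 then (k - 1) / 3 else (k + 1) / 3

/-- `L_k` from the paper: `k/3`, `(k+2)/3`, `(k-2)/3` according to `k mod 3 = 0, 1, 2`,
so `2l_k + L_k = k`. -/
def Lk (k : ℕ) : ℕ :=
  if k % 3 = 0 then k / 3 else if k % 3 = 1 then (k + 2) / 3 else (k - 2) / 3

/-- The unordered pair of endpoints `{r_x, r_z⁻¹}` of the `Σ₁`-edge of a relator `r`,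
where `r = r_x r_y r_z` with `|r_x| = |r_y| = l_k` and `|r_z| = L_k`. -/
def edge1 {n k : ℕ} (r : CWord n k) : Sym2 (List (Letter n)) :=
  s(r.1.toList.take (lk k), linv (r.1.toList.drop (2 * lk k)))

/-- The unordered pair of endpoints `{r_y, r_x⁻¹}` of the `Σ₂`-edge of a relator `r`. -/
def edge2 {n k : ℕ} (r : CWord n k) : Sym2 (List (Letter n)) :=
  s((r.1.toList.drop (lk k)).take (lk k), linv (r.1.toList.take (lk k)))

/-- The unordered pair of endpoints `{r_z, r_y⁻¹}` of the `Σ₃`-edge of a relator `r`. -/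
def edge3 {n k : ℕ} (r : CWord n k) : Sym2 (List (Letter n)) :=
  s(r.1.toList.drop (2 * lk k), linv ((r.1.toList.drop (lk k)).take (lk k)))

/-- The number of edges joining `u` and `v` in the multigraph `Σ` whose edges have endpoint
pairs `ep r` for relators `r` in the random set `R = {r | ω r = true}`. -/
def multE {n k : ℕ} (ep : CWord n k → Sym2 (List (Letter n))) (ω : CWord n k → Bool)
    (u v : List (Letter n)) : ℕ :=
  (Finset.univ.filter fun r : CWord n k => ω r = true ∧ ep r = s(u, v)).card

/-- Bernoulli weight of a Boolean value. -/
def bern (p : ℝ) (b : Bool) : ℝ := if b then p else 1 - p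

/-- Probability of the event `E` for the random set of relators obtained by including each
cyclically reduced word of length `k` independently with probability `p`. -/
noncomputable def cProb (n k : ℕ) (p : ℝ) (E : Set (CWord n k → Bool)) : ℝ :=
  haveI := Classical.dec
  ∑ ω : CWord n k → Bool, if ω ∈ E then ∏ r, bern p (ω r) else 0


/-- No two vertices of `Σ` are joined by `M` or more edges, and no vertex of `Σ` is joined by
two or more edges to more than `M` distinct other vertices. -/
def boundedMultiplicity {n k : ℕ} (M : ℕ) (ep : CWord n k → Sym2 (List (Letter n)))
    (ω : CWord n k → Bool) : Prop :=
  (∀ u v, multE ep ω u v < M) ∧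
  (∀ u : List (Letter n), ∀ S : Finset (List (Letter n)),
    (∀ v ∈ S, v ≠ u ∧ 2 ≤ multE ep ω u v) → S.card ≤ M)

/-!
Each relator `r = r_x r_y r_z` is determined by the two endpoints of its edge in `Σᵢ` together
with the remaining piece, a word of known length. Hence, if the endpoints and the remaining piece
have lengths `a`, `b`, `f`, every edge of `Σᵢ` has at most `2 (2n)^f` parallel copies and every
vertex meets at most `((2n)^a + (2n)^b) (2n)^f` edges, while `|C(n,k)| ≤ (2n)^(a+b+f)`.
A union bound then handles both bad events: `M` parallel edges are `M` relators of one parallel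
class that all lie in `R`, and `M` neighbours of `u` joined to it by double edges give `2M`
distinct relators of `R`, chosen as `M` pairs of parallel relators incident to `u`. The resulting
bounds are of the form `(2n)^e p^M` and `(2n)^e p^(2M)`, with the exponents of hypotheses (i)–(v).
-/

open Finset

section BernoulliProduct

variable {α : Type*} [Fintype α] {p : ℝ}

noncomputable def bernWeight (p : ℝ) (ω : α → Bool) : ℝ := ∏ a, bern p (ω a)

theorem bernWeight_nonneg (hp0 : 0 ≤ p) (hp1 : p ≤ 1) (ω : α → Bool) : 0 ≤ bernWeight p ω :=
  prod_nonneg fun a _ => by cases ω a <;> simp [bern] <;> linarith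

variable [DecidableEq α]

noncomputable def bernProb (p : ℝ) (E : Set (α → Bool)) : ℝ :=
  ∑ ω, E.indicator (bernWeight p) ω

theorem cProb_eq_bernProb (n k : ℕ) (p : ℝ) (E : Set (CWord n k → Bool)) :
    cProb n k p E = bernProb p E := by
  simp only [cProb, bernProb, Set.indicator, bernWeight]
  congr 2
  exact Subsingleton.elim _ _

theorem bernProb_forall_mem (T : Finset α) :
    bernProb p {ω | ∀ a ∈ T, ω a = true} = p ^ #T := by
  have hind : {ω : α → Bool | ∀ a ∈ T, ω a = true}.indicator (bernWeight p)
      = fun ω => ∏ a, if a ∈ T ∧ ω a = false then 0 else bern p (ω a) := by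
    ext ω
    by_cases hω : ∀ a ∈ T, ω a = true
    · rw [Set.indicator_of_mem (by exact hω)]
      refine prod_congr rfl fun a _ => ?_
      rw [if_neg fun h => by simp [hω a h.1] at h]
    · rw [Set.indicator_of_notMem (by exact hω)]
      push Not at hω
      obtain ⟨a, ha, hωa⟩ := hω
      refine (prod_eq_zero (mem_univ a) ?_).symm
      simp [ha, hωa]
  rw [bernProb, hind, ← Fintype.prod_sum (fun a b => if a ∈ T ∧ b = false then 0 else bern p b)]
  have hsum : ∀ a, ∑ b : Bool, (if a ∈ T ∧ b = false then 0 else bern p b)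
      = if a ∈ T then p else 1 := fun a => by
    by_cases ha : a ∈ T <;> simp [ha, bern]
  simp only [hsum, prod_ite_mem, univ_inter, prod_const]

theorem bernProb_univ : bernProb p (Set.univ : Set (α → Bool)) = 1 := by
  simpa using bernProb_forall_mem (p := p) (α := α) ∅

theorem bernProb_compl (E : Set (α → Bool)) : bernProb p Eᶜ = 1 - bernProb p E := by
  rw [← bernProb_univ (p := p) (α := α), eq_sub_iff_add_eq]
  simp only [bernProb, ← sum_add_distrib, Set.indicator_univ]
  simp [add_comm, Set.indicator_self_add_compl_apply]

theorem bernProb_nonneg (hp0 : 0 ≤ p) (hp1 : p ≤ 1) (E : Set (α → Bool)) : 0 ≤ bernProb p E :=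
  sum_nonneg fun ω _ => Set.indicator_nonneg (fun ω _ => bernWeight_nonneg hp0 hp1 ω) ω

theorem bernProb_mono (hp0 : 0 ≤ p) (hp1 : p ≤ 1) {E F : Set (α → Bool)} (h : E ⊆ F) :
    bernProb p E ≤ bernProb p F :=
  sum_le_sum fun ω _ => Set.indicator_le_indicator_of_subset h (bernWeight_nonneg hp0 hp1) ω

theorem bernProb_biUnion_le (hp0 : 0 ≤ p) (hp1 : p ≤ 1) {ι : Type*} (I : Finset ι)
    (E : ι → Set (α → Bool)) : bernProb p (⋃ i ∈ I, E i) ≤ ∑ i ∈ I, bernProb p (E i) := by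
  simp only [bernProb]
  rw [sum_comm]
  refine sum_le_sum fun ω _ => ?_
  have hE : ∀ i ∈ I, 0 ≤ (E i).indicator (bernWeight p) ω := fun i _ =>
    Set.indicator_nonneg (fun ω _ => bernWeight_nonneg hp0 hp1 ω) ω
  by_cases hω : ω ∈ ⋃ i ∈ I, E i
  · obtain ⟨i, hi, hωi⟩ := Set.mem_iUnion₂.1 hω
    rw [Set.indicator_of_mem hω, ← Set.indicator_of_mem hωi (bernWeight p)]
    exact single_le_sum hE hi
  · rw [Set.indicator_of_notMem hω]
    exact sum_nonneg hE

theorem bernProb_union_le (hp0 : 0 ≤ p) (hp1 : p ≤ 1) (E F : Set (α → Bool)) :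
    bernProb p (E ∪ F) ≤ bernProb p E + bernProb p F := by
  simpa [Set.union_eq_iUnion] using bernProb_biUnion_le hp0 hp1 univ (fun b => cond b E F)

theorem bernProb_exists_forall_mem_le (hp0 : 0 ≤ p) (hp1 : p ≤ 1) {ι : Type*} (I : Finset ι)
    (T : ι → Finset α) :
    bernProb p {ω | ∃ i ∈ I, ∀ a ∈ T i, ω a = true} ≤ ∑ i ∈ I, p ^ #(T i) := by
  have hE : {ω : α → Bool | ∃ i ∈ I, ∀ a ∈ T i, ω a = true}
      = ⋃ i ∈ I, {ω | ∀ a ∈ T i, ω a = true} := by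
    ext ω; simp
  simpa only [hE, bernProb_forall_mem] using
    bernProb_biUnion_le hp0 hp1 I fun i => {ω : α → Bool | ∀ a ∈ T i, ω a = true}

theorem bernProb_le_choose_mul_pow (hp0 : 0 ≤ p) (hp1 : p ≤ 1) (S : Finset α) (m : ℕ) :
    bernProb p {ω | m ≤ #{a ∈ S | ω a = true}} ≤ (#S).choose m * p ^ m := by
  calc bernProb p {ω | m ≤ #{a ∈ S | ω a = true}}
      ≤ bernProb p {ω | ∃ T ∈ S.powersetCard m, ∀ a ∈ T, ω a = true} := by
        refine bernProb_mono hp0 hp1 fun ω hω => ?_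
        obtain ⟨T, hTS, hT⟩ := exists_subset_card_eq hω
        refine ⟨T, mem_powersetCard.2 ⟨hTS.trans (filter_subset _ _), hT⟩, fun a ha => ?_⟩
        exact (mem_filter.1 (hTS ha)).2
    _ ≤ ∑ T ∈ S.powersetCard m, p ^ #T := bernProb_exists_forall_mem_le hp0 hp1 _ id
    _ = (#S).choose m * p ^ m := by
        rw [sum_congr rfl fun T hT => by rw [(mem_powersetCard.1 hT).2], sum_const,
          card_powersetCard, nsmul_eq_mul]

end BernoulliProduct

section Multigraph

variable {Ω V : Type*} [Fintype Ω] [DecidableEq Ω] [DecidableEq V] (A B : Ω → V) {p : ℝ}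

def edgeMult (ω : Ω → Bool) (u v : V) : ℕ := #{r | ω r = true ∧ s(A r, B r) = s(u, v)}

theorem bernProb_exists_edgeMult_ge_le (hp0 : 0 ≤ p) (hp1 : p ≤ 1) (m N : ℕ)
    (hN : ∀ e, #{r | s(A r, B r) = e} ≤ N) :
    bernProb p {ω | ∃ u v, m + 1 ≤ edgeMult A B ω u v}
      ≤ Fintype.card Ω * N ^ m * p ^ (m + 1) := by
  set E := univ.image fun r => s(A r, B r)
  have hcover : {ω | ∃ u v, m + 1 ≤ edgeMult A B ω u v}
      ⊆ ⋃ e ∈ E, {ω | m + 1 ≤ #{r ∈ {r | s(A r, B r) = e} | ω r = true}} := by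
    rintro ω ⟨u, v, huv⟩
    have hfilter : {r ∈ ({r | s(A r, B r) = s(u, v)} : Finset Ω) | ω r = true}
        = ({r | ω r = true ∧ s(A r, B r) = s(u, v)} : Finset Ω) := by
      ext r; simp [and_comm]
    obtain ⟨r, hr⟩ : ({r | ω r = true ∧ s(A r, B r) = s(u, v)} : Finset Ω).Nonempty :=
      card_pos.1 (by unfold edgeMult at huv; omega)
    refine Set.mem_iUnion₂.2 ⟨s(u, v), mem_image.2 ⟨r, mem_univ r, (mem_filter.1 hr).2.2⟩, ?_⟩
    rw [Set.mem_ofPred_eq, hfilter]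
    exact huv
  have hchoose : ∀ e, (#{r | s(A r, B r) = e}).choose (m + 1) ≤ #{r | s(A r, B r) = e} * N ^ m :=
    fun e => (Nat.choose_le_pow _ _).trans (by rw [pow_succ']; gcongr; exact hN e)
  calc bernProb p {ω | ∃ u v, m + 1 ≤ edgeMult A B ω u v}
      ≤ ∑ e ∈ E, bernProb p {ω | m + 1 ≤ #{r ∈ {r | s(A r, B r) = e} | ω r = true}} :=
        (bernProb_mono hp0 hp1 hcover).trans (bernProb_biUnion_le hp0 hp1 _ _)
    _ ≤ ∑ e ∈ E, ((#{r | s(A r, B r) = e} * N ^ m : ℕ) : ℝ) * p ^ (m + 1) := by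
        refine sum_le_sum fun e _ => (bernProb_le_choose_mul_pow hp0 hp1 _ _).trans ?_
        gcongr
        exact_mod_cast hchoose e
    _ = Fintype.card Ω * N ^ m * p ^ (m + 1) := by
        rw [← sum_mul, ← Nat.cast_sum, ← sum_mul, ← card_eq_sum_card_image, card_univ]
        push_cast; ring

def parallelPairsAt (u : V) : Finset (Ω × Ω) :=
  {q | (A q.1 = u ∨ B q.1 = u) ∧ s(A q.2, B q.2) = s(A q.1, B q.1)}

theorem card_parallelPairsAt_le (N : ℕ) (hN : ∀ e, #{r | s(A r, B r) = e} ≤ N) (u : V) :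
    #(parallelPairsAt A B u) ≤ #{r | A r = u ∨ B r = u} * N := by
  rw [card_eq_sum_card_fiberwise (f := Prod.fst) (t := {r | A r = u ∨ B r = u})
    fun q hq => by simpa [parallelPairsAt] using (mem_filter.1 hq).2.1]
  refine sum_le_card_nsmul _ _ _ fun r _ => (hN s(A r, B r)).trans' ?_
  refine card_le_card_of_injOn Prod.snd (fun q hq => ?_) fun q hq q' hq' h => ?_
  · obtain ⟨hpair, rfl⟩ := mem_filter.1 hq
    exact mem_filter.2 ⟨mem_univ _, (mem_filter.1 hpair).2.2⟩
  · exact Prod.ext ((mem_filter.1 hq).2.trans (mem_filter.1 hq').2.symm) h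

/-- Witnesses are `m + 1` pairs of parallel retained edges at `u`; pairs towards distinct
neighbours `v` lie on distinct edges `s(u, v)`, so the `2 (m + 1)` edges are distinct. -/
theorem exists_double_edges_at_subset (u : V) (m : ℕ) :
    {ω | ∃ S : Finset V, (∀ v ∈ S, 2 ≤ edgeMult A B ω u v) ∧ m + 1 ≤ #S}
      ⊆ {ω | ∃ x ∈ {x ∈ Fintype.piFinset fun _ : Fin (m + 1) => parallelPairsAt A B u |
            #(univ.biUnion fun i => {(x i).1, (x i).2}) = 2 * (m + 1)},
          ∀ r ∈ univ.biUnion (fun i => {(x i).1, (x i).2}), ω r = true} := by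
  rintro ω ⟨S, hS, hcard⟩
  set v : Fin (m + 1) → V := fun i => (S.equivFin.symm (Fin.castLE hcard i)).1
  have hv_inj : Function.Injective v := fun i j hij =>
    Fin.castLE_injective hcard (S.equivFin.symm.injective (Subtype.ext hij))
  have hpair : ∀ i, ∃ r r', r ≠ r' ∧ ∀ a ∈ ({r, r'} : Finset Ω),
      ω a = true ∧ s(A a, B a) = s(u, v i) := by
    intro i
    obtain ⟨r, r', hr, hr', hne⟩ := one_lt_card_iff.1 (hS _ (S.equivFin.symm _).2)
    refine ⟨r, r', hne, fun a ha => ?_⟩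
    rcases mem_insert.1 ha with rfl | ha
    · exact (mem_filter.1 hr).2
    · rw [mem_singleton.1 ha]; exact (mem_filter.1 hr').2
  choose r r' hne hrr' using hpair
  have hT : ∀ a ∈ univ.biUnion (fun i => ({r i, r' i} : Finset Ω)), ω a = true := by
    intro a ha
    obtain ⟨i, -, hai⟩ := mem_biUnion.1 ha
    exact (hrr' i a hai).1
  refine ⟨fun i => (r i, r' i), mem_filter.2 ⟨Fintype.mem_piFinset.2 fun i => ?_, ?_⟩, hT⟩
  · have h1 := (hrr' i (r i) (by simp)).2
    have h2 := (hrr' i (r' i) (by simp)).2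
    refine mem_filter.2 ⟨mem_univ _, ?_, h2.trans h1.symm⟩
    have hu : u ∈ s(A (r i), B (r i)) := h1 ▸ Sym2.mem_mk_left u (v i)
    exact (Sym2.mem_iff.1 hu).imp Eq.symm Eq.symm
  · rw [card_biUnion]
    · simp [card_pair (hne _), mul_comm]
    · intro i _ j _ hij
      refine disjoint_left.2 fun a hai haj => hij (hv_inj ?_)
      exact Sym2.congr_right.1 ((hrr' i a hai).2.symm.trans (hrr' j a haj).2)

theorem bernProb_exists_double_edges_at_le (hp0 : 0 ≤ p) (hp1 : p ≤ 1) (u : V) (m : ℕ) :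
    bernProb p {ω | ∃ S : Finset V, (∀ v ∈ S, 2 ≤ edgeMult A B ω u v) ∧ m + 1 ≤ #S}
      ≤ #(parallelPairsAt A B u) ^ (m + 1) * p ^ (2 * (m + 1)) := by
  refine (bernProb_mono hp0 hp1 (exists_double_edges_at_subset A B u m)).trans ?_
  refine (bernProb_exists_forall_mem_le hp0 hp1 _ _).trans ?_
  rw [sum_congr rfl fun x hx => by rw [(mem_filter.1 hx).2], sum_const, nsmul_eq_mul]
  gcongr
  exact_mod_cast (card_filter_le _ _).trans (Fintype.card_piFinset_const _ _).le

theorem sum_card_incident_le :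
    ∑ u ∈ univ.image A ∪ univ.image B, #{r | A r = u ∨ B r = u} ≤ 2 * Fintype.card Ω := by
  have hfiber : ∀ f : Ω → V, (∀ r, f r ∈ univ.image A ∪ univ.image B) →
      ∑ u ∈ univ.image A ∪ univ.image B, #{r | f r = u} = Fintype.card Ω := fun f hf =>
    (card_eq_sum_card_fiberwise fun r _ => hf r).symm
  calc ∑ u ∈ univ.image A ∪ univ.image B, #{r | A r = u ∨ B r = u}
      ≤ ∑ u ∈ univ.image A ∪ univ.image B, (#{r | A r = u} + #{r | B r = u}) :=
        sum_le_sum fun u _ => by rw [filter_or]; exact card_union_le _ _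
    _ = 2 * Fintype.card Ω := by
        rw [sum_add_distrib, hfiber A (by simp), hfiber B (by simp), two_mul]

theorem sum_pow_card_incident_le (m N D : ℕ) (hD : ∀ u, #{r | A r = u ∨ B r = u} ≤ D) :
    ∑ u ∈ univ.image A ∪ univ.image B, (#{r | A r = u ∨ B r = u} * N) ^ (m + 1)
      ≤ 2 * Fintype.card Ω * D ^ m * N ^ (m + 1) :=
  calc ∑ u ∈ univ.image A ∪ univ.image B, (#{r | A r = u ∨ B r = u} * N) ^ (m + 1)
      ≤ ∑ u ∈ univ.image A ∪ univ.image B, #{r | A r = u ∨ B r = u} * (D ^ m * N ^ (m + 1)) := by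
        refine sum_le_sum fun u _ => ?_
        rw [mul_pow, pow_succ' _ m, mul_assoc]
        gcongr
        exact hD u
    _ ≤ 2 * Fintype.card Ω * D ^ m * N ^ (m + 1) := by
        rw [← sum_mul, mul_assoc _ (D ^ m)]
        gcongr
        exact sum_card_incident_le A B

theorem bernProb_exists_double_edges_le (hp0 : 0 ≤ p) (hp1 : p ≤ 1) (m N D : ℕ)
    (hN : ∀ e, #{r | s(A r, B r) = e} ≤ N) (hD : ∀ u, #{r | A r = u ∨ B r = u} ≤ D) :
    bernProb p {ω | ∃ u, ∃ S : Finset V, (∀ v ∈ S, 2 ≤ edgeMult A B ω u v) ∧ m + 1 ≤ #S}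
      ≤ 2 * Fintype.card Ω * D ^ m * N ^ (m + 1) * p ^ (2 * (m + 1)) := by
  set U := univ.image A ∪ univ.image B
  have hcover : {ω | ∃ u, ∃ S : Finset V, (∀ v ∈ S, 2 ≤ edgeMult A B ω u v) ∧ m + 1 ≤ #S}
      ⊆ ⋃ u ∈ U, {ω | ∃ S : Finset V, (∀ v ∈ S, 2 ≤ edgeMult A B ω u v) ∧ m + 1 ≤ #S} := by
    rintro ω ⟨u, S, hS, hcard⟩
    obtain ⟨v, hv⟩ := card_pos.1 (Nat.lt_of_lt_of_le m.succ_pos hcard)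
    obtain ⟨r, hr⟩ := card_pos.1 (Nat.lt_of_lt_of_le two_pos (hS v hv))
    have hu : u ∈ s(A r, B r) := (mem_filter.1 hr).2.2 ▸ Sym2.mem_mk_left u v
    refine Set.mem_iUnion₂.2 ⟨u, ?_, S, hS, hcard⟩
    rcases Sym2.mem_iff.1 hu with rfl | rfl <;> simp [U]
  calc _ ≤ ∑ u ∈ U, bernProb p
          {ω | ∃ S : Finset V, (∀ v ∈ S, 2 ≤ edgeMult A B ω u v) ∧ m + 1 ≤ #S} :=
        (bernProb_mono hp0 hp1 hcover).trans (bernProb_biUnion_le hp0 hp1 _ _)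
    _ ≤ ∑ u ∈ U, (((#{r | A r = u ∨ B r = u} * N) ^ (m + 1) : ℕ) : ℝ) * p ^ (2 * (m + 1)) := by
        refine sum_le_sum fun u _ => (bernProb_exists_double_edges_at_le A B hp0 hp1 u m).trans ?_
        gcongr
        exact_mod_cast Nat.pow_le_pow_left (card_parallelPairsAt_le A B N hN u) _
    _ ≤ 2 * Fintype.card Ω * D ^ m * N ^ (m + 1) * p ^ (2 * (m + 1)) := by
        rw [← sum_mul]
        gcongr
        exact_mod_cast sum_pow_card_incident_le A B m N D hD

end Multigraph

section InjectiveTriple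

variable {Ω V W : Type*} [Fintype Ω]

theorem card_filter_eq_le_of_injective {β γ : Type*} [DecidableEq β] (G : Ω → β) (H : Ω → γ)
    (hGH : Function.Injective fun r => (G r, H r)) (s : Finset γ) (hH : ∀ r, H r ∈ s) (c : β) :
    #{r | G r = c} ≤ #s :=
  card_le_card_of_injOn H (fun r _ => hH r) fun _ hr _ hr' h =>
    hGH (Prod.ext ((mem_filter.1 hr).2.trans (mem_filter.1 hr').2.symm) h)

variable {A B : Ω → V} {F : Ω → W} {sA sB : Finset V} {sF : Finset W}

theorem card_le_of_injective_triple (hinj : Function.Injective fun r => (A r, B r, F r))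
    (hA : ∀ r, A r ∈ sA) (hB : ∀ r, B r ∈ sB) (hF : ∀ r, F r ∈ sF) :
    Fintype.card Ω ≤ #sA * #sB * #sF := by
  rw [← card_univ, mul_assoc, ← card_product, ← card_product]
  exact card_le_card_of_injOn _ (fun r _ => by simp [hA, hB, hF]) hinj.injOn

theorem card_edge_fiber_le [DecidableEq Ω] [DecidableEq V]
    (hinj : Function.Injective fun r => (A r, B r, F r)) (hF : ∀ r, F r ∈ sF) (e : Sym2 V) :
    #{r | s(A r, B r) = e} ≤ 2 * #sF := by
  induction e using Sym2.ind with | _ a b => ?_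
  have hAB : Function.Injective fun r => ((A r, B r), F r) := fun _ _ h =>
    hinj (by simpa [and_assoc] using h)
  calc #{r | s(A r, B r) = s(a, b)}
      ≤ #(({r | (A r, B r) = (a, b)} : Finset Ω) ∪ ({r | (A r, B r) = (b, a)} : Finset Ω)) := by
        refine card_le_card fun r hr => ?_
        simpa [Sym2.eq_iff] using (mem_filter.1 hr).2
    _ ≤ 2 * #sF := by
        rw [two_mul]
        exact (card_union_le _ _).trans (add_le_add
          (card_filter_eq_le_of_injective _ _ hAB sF hF _)
          (card_filter_eq_le_of_injective _ _ hAB sF hF _))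

theorem card_incident_le [DecidableEq Ω] [DecidableEq V]
    (hinj : Function.Injective fun r => (A r, B r, F r))
    (hA : ∀ r, A r ∈ sA) (hB : ∀ r, B r ∈ sB) (hF : ∀ r, F r ∈ sF) (u : V) :
    #{r | A r = u ∨ B r = u} ≤ (#sA + #sB) * #sF := by
  have hBA : Function.Injective fun r => (B r, A r, F r) := fun _ _ h =>
    hinj (by simp_all)
  rw [filter_or, add_mul, add_comm]
  refine (card_union_le _ _).trans (add_le_add ?_ ?_)
  · rw [← card_product]
    exact card_filter_eq_le_of_injective _ _ hinj _ (fun r => mem_product.2 ⟨hB r, hF r⟩) u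
  · rw [← card_product]
    exact card_filter_eq_le_of_injective _ _ hBA _ (fun r => mem_product.2 ⟨hA r, hF r⟩) u

theorem bernProb_multiple_or_double_edges_le [DecidableEq Ω] [DecidableEq V] {p : ℝ}
    (hp0 : 0 ≤ p) (hp1 : p ≤ 1) (hinj : Function.Injective fun r => (A r, B r, F r))
    (hA : ∀ r, A r ∈ sA) (hB : ∀ r, B r ∈ sB) (hF : ∀ r, F r ∈ sF) (m : ℕ) :
    bernProb p ({ω | ∃ u v, m + 1 ≤ edgeMult A B ω u v} ∪
        {ω | ∃ u, ∃ S : Finset V, (∀ v ∈ S, 2 ≤ edgeMult A B ω u v) ∧ m + 1 ≤ #S})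
      ≤ #sA * #sB * #sF * (2 * #sF) ^ m * p ^ (m + 1)
        + 2 * (#sA * #sB * #sF) * ((#sA + #sB) * #sF) ^ m * (2 * #sF) ^ (m + 1)
          * p ^ (2 * (m + 1)) := by
  have hΩ : (Fintype.card Ω : ℝ) ≤ #sA * #sB * #sF := by
    exact_mod_cast card_le_of_injective_triple hinj hA hB hF
  refine (bernProb_union_le hp0 hp1 _ _).trans (add_le_add ?_ ?_)
  · refine (bernProb_exists_edgeMult_ge_le A B hp0 hp1 m _
      (card_edge_fiber_le hinj hF)).trans ?_
    push_cast
    gcongr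
  · refine (bernProb_exists_double_edges_le A B hp0 hp1 m _ _
      (card_edge_fiber_le hinj hF) (card_incident_le hinj hA hB hF)).trans ?_
    push_cast
    gcongr

end InjectiveTriple

theorem moment_bound_le {X q : ℝ} (hX : 0 ≤ X) (hq : 0 ≤ q) (m la lb lf : ℕ) :
    X ^ la * X ^ lb * X ^ lf * (2 * X ^ lf) ^ m * q ^ (m + 1)
      + 2 * (X ^ la * X ^ lb * X ^ lf) * ((X ^ la + X ^ lb) * X ^ lf) ^ m * (2 * X ^ lf) ^ (m + 1)
        * q ^ (2 * (m + 1))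
    ≤ 2 ^ m * (X ^ (la + lb + lf + m * lf) * q ^ (m + 1))
      + 2 ^ (2 * m + 2) * (X ^ (la + lb + lf + m * (la + lf) + (m + 1) * lf) * q ^ (2 * (m + 1))
        + X ^ (la + lb + lf + m * (lb + lf) + (m + 1) * lf) * q ^ (2 * (m + 1))) := by
  have hsum : (X ^ la + X ^ lb) ^ m ≤ 2 ^ m * ((X ^ la) ^ m + (X ^ lb) ^ m) :=
    (add_pow_le (by positivity) (by positivity) m).trans
      (by gcongr; exacts [one_le_two, Nat.sub_le m 1])
  rw [mul_pow (X ^ la + X ^ lb)]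
  calc _ = 2 ^ m * (X ^ (la + lb + lf + m * lf) * q ^ (m + 1))
        + 2 ^ (m + 2) * (X ^ la + X ^ lb) ^ m
          * (X ^ (la + lb + lf + m * lf + (m + 1) * lf) * q ^ (2 * (m + 1))) := by ring
    _ ≤ 2 ^ m * (X ^ (la + lb + lf + m * lf) * q ^ (m + 1))
        + 2 ^ (m + 2) * (2 ^ m * ((X ^ la) ^ m + (X ^ lb) ^ m))
          * (X ^ (la + lb + lf + m * lf + (m + 1) * lf) * q ^ (2 * (m + 1))) := by gcongr
    _ = _ := by ring

theorem tendsto_two_mul_pow_mul {q : ℕ → ℝ} (hq : ∀ n, 0 ≤ q n) {e e' : ℕ} (he : e ≤ e')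
    (h : Tendsto (fun n : ℕ => (2 * (n : ℝ) - 1) ^ e' * q n) atTop (nhds 0)) :
    Tendsto (fun n : ℕ => (2 * (n : ℝ)) ^ e * q n) atTop (nhds 0) := by
  refine squeeze_zero' (Eventually.of_forall fun n => mul_nonneg (by positivity) (hq n)) ?_
    (by simpa using h.const_mul (2 ^ e))
  filter_upwards [eventually_ge_atTop 1] with n hn
  have h1 : (1 : ℝ) ≤ 2 * n - 1 := by
    have : (1 : ℝ) ≤ n := by exact_mod_cast hn
    linarith
  calc (2 * (n : ℝ)) ^ e * q n ≤ (2 * (2 * n - 1)) ^ e * q n := by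
        gcongr
        · exact hq n
        · linarith
    _ = 2 ^ e * ((2 * n - 1) ^ e * q n) := by rw [mul_pow, mul_assoc]
    _ ≤ 2 ^ e * ((2 * n - 1) ^ e' * q n) := by
        gcongr
        exact hq n

theorem linv_linv {n : ℕ} (w : List (Letter n)) : linv (linv w) = w := by
  simp [linv, Function.comp_def]

theorem linv_injective {n : ℕ} : Function.Injective (linv (n := n)) :=
  Function.LeftInverse.injective linv_linv

theorem length_linv {n : ℕ} (w : List (Letter n)) : (linv w).length = w.length := by
  simp [linv]

theorem two_mul_lk_add_Lk (k : ℕ) : 2 * lk k + Lk k = k := by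
  unfold lk Lk
  split_ifs <;> omega

def wordsOfLength (n ℓ : ℕ) : Finset (List (Letter n)) :=
  (univ : Finset (List.Vector (Letter n) ℓ)).map ⟨List.Vector.toList, List.Vector.toList_injective⟩

theorem mem_wordsOfLength {n ℓ : ℕ} {w : List (Letter n)} :
    w ∈ wordsOfLength n ℓ ↔ w.length = ℓ :=
  ⟨fun h => by obtain ⟨v, -, rfl⟩ := Finset.mem_map.1 h; exact v.2,
    fun h => Finset.mem_map.2 ⟨⟨w, h⟩, mem_univ _, rfl⟩⟩

theorem card_wordsOfLength (n ℓ : ℕ) : #(wordsOfLength n ℓ) = (2 * n) ^ ℓ := by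
  simp [wordsOfLength, mul_comm]

namespace CWord

variable {n k : ℕ}

def x (r : CWord n k) : List (Letter n) := r.1.toList.take (lk k)

def y (r : CWord n k) : List (Letter n) := (r.1.toList.drop (lk k)).take (lk k)

def z (r : CWord n k) : List (Letter n) := r.1.toList.drop (2 * lk k)

theorem length_x (r : CWord n k) : r.x.length = lk k := by
  simp only [x, List.length_take, List.Vector.toList_length]
  have := two_mul_lk_add_Lk k
  omega

theorem length_y (r : CWord n k) : r.y.length = lk k := by
  simp only [y, List.length_take, List.length_drop, List.Vector.toList_length]
  have := two_mul_lk_add_Lk k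
  omega

theorem length_z (r : CWord n k) : r.z.length = Lk k := by
  simp only [z, List.length_drop, List.Vector.toList_length]
  have := two_mul_lk_add_Lk k
  omega

theorem toList_eq_x_append (r : CWord n k) : r.1.toList = r.x ++ (r.y ++ r.z) := by
  rw [x, y, z, two_mul, ← List.drop_drop, List.take_append_drop, List.take_append_drop]

theorem ext_xyz {r r' : CWord n k} (hx : r.x = r'.x) (hy : r.y = r'.y) (hz : r.z = r'.z) :
    r = r' :=
  Subtype.ext (List.Vector.eq _ _ (by rw [toList_eq_x_append, toList_eq_x_append, hx, hy, hz]))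

theorem injective_x_linv_z_y : Function.Injective fun r : CWord n k => (r.x, linv r.z, r.y) :=
  fun _ _ h => by
    simp only [Prod.mk.injEq, linv_injective.eq_iff] at h
    exact ext_xyz h.1 h.2.2 h.2.1

theorem injective_y_linv_x_z : Function.Injective fun r : CWord n k => (r.y, linv r.x, r.z) :=
  fun _ _ h => by
    simp only [Prod.mk.injEq, linv_injective.eq_iff] at h
    exact ext_xyz h.2.1 h.1 h.2.2

theorem injective_z_linv_y_x : Function.Injective fun r : CWord n k => (r.z, linv r.y, r.x) :=
  fun _ _ h => by
    simp only [Prod.mk.injEq, linv_injective.eq_iff] at h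
    exact ext_xyz h.2.2 h.2.1 h.1

end CWord

theorem not_boundedMultiplicity_subset {n k : ℕ} (A B : CWord n k → List (Letter n)) (m : ℕ) :
    {ω | ¬ boundedMultiplicity (m + 1) (fun r => s(A r, B r)) ω}
      ⊆ {ω | ∃ u v, m + 1 ≤ edgeMult A B ω u v} ∪
        {ω | ∃ u, ∃ S : Finset (List (Letter n)),
          (∀ v ∈ S, 2 ≤ edgeMult A B ω u v) ∧ m + 1 ≤ #S} := by
  intro ω hω
  simp only [boundedMultiplicity, not_and_or, not_forall, not_lt, not_le] at hω
  rcases hω with ⟨u, v, huv⟩ | ⟨u, S, hS, hcard⟩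
  · exact Or.inl ⟨u, v, huv⟩
  · exact Or.inr ⟨u, S, fun v hv => (hS v hv).2, hcard.le⟩

theorem tendsto_bernProb_not_boundedMultiplicity {k m la lb lf e₁ e₂ e₃ : ℕ} {p : ℕ → ℝ}
    (hp : ∀ n, 0 ≤ p n ∧ p n ≤ 1) (A B F : ∀ n, CWord n k → List (Letter n))
    (hinj : ∀ n, Function.Injective fun r => (A n r, B n r, F n r))
    (hA : ∀ n r, (A n r).length = la) (hB : ∀ n r, (B n r).length = lb)
    (hF : ∀ n r, (F n r).length = lf)
    (h₁ : Tendsto (fun n : ℕ => (2 * (n : ℝ) - 1) ^ e₁ * p n ^ (m + 1)) atTop (nhds 0))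
    (he₁ : la + lb + lf + m * lf ≤ e₁)
    (h₂ : Tendsto (fun n : ℕ => (2 * (n : ℝ) - 1) ^ e₂ * p n ^ (2 * (m + 1))) atTop (nhds 0))
    (he₂ : la + lb + lf + m * (la + lf) + (m + 1) * lf ≤ e₂)
    (h₃ : Tendsto (fun n : ℕ => (2 * (n : ℝ) - 1) ^ e₃ * p n ^ (2 * (m + 1))) atTop (nhds 0))
    (he₃ : la + lb + lf + m * (lb + lf) + (m + 1) * lf ≤ e₃) :
    Tendsto (fun n => bernProb (p n)
      {ω : CWord n k → Bool | ¬ boundedMultiplicity (m + 1) (fun r => s(A n r, B n r)) ω})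
      atTop (nhds 0) := by
  have hbound : ∀ n, bernProb (p n)
      {ω : CWord n k → Bool | ¬ boundedMultiplicity (m + 1) (fun r => s(A n r, B n r)) ω}
      ≤ 2 ^ m * ((2 * (n : ℝ)) ^ (la + lb + lf + m * lf) * p n ^ (m + 1))
        + 2 ^ (2 * m + 2) *
          ((2 * (n : ℝ)) ^ (la + lb + lf + m * (la + lf) + (m + 1) * lf) * p n ^ (2 * (m + 1))
            + (2 * (n : ℝ)) ^ (la + lb + lf + m * (lb + lf) + (m + 1) * lf)
              * p n ^ (2 * (m + 1))) := by
    intro n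
    refine (bernProb_mono (hp n).1 (hp n).2 (not_boundedMultiplicity_subset _ _ m)).trans ?_
    refine (bernProb_multiple_or_double_edges_le (hp n).1 (hp n).2 (hinj n)
      (fun r => mem_wordsOfLength.2 (hA n r)) (fun r => mem_wordsOfLength.2 (hB n r))
      (fun r => mem_wordsOfLength.2 (hF n r)) m).trans ?_
    simp only [card_wordsOfLength, Nat.cast_pow, Nat.cast_mul, Nat.cast_ofNat]
    exact moment_bound_le (by positivity) (hp n).1 m la lb lf
  have hq : ∀ j n, 0 ≤ p n ^ j := fun j n => pow_nonneg (hp n).1 j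
  refine squeeze_zero (fun n => bernProb_nonneg (hp n).1 (hp n).2 _) hbound ?_
  simpa using ((tendsto_two_mul_pow_mul (hq _) he₁ h₁).const_mul _).add
    (((tendsto_two_mul_pow_mul (hq _) he₂ h₂).add
      (tendsto_two_mul_pow_mul (hq _) he₃ h₃)).const_mul _)

theorem tendsto_bernProb_and_and {α : ℕ → Type*} [∀ n, Fintype (α n)] [∀ n, DecidableEq (α n)]
    {p : ℕ → ℝ} (hp : ∀ n, 0 ≤ p n ∧ p n ≤ 1) {P Q R : ∀ n, (α n → Bool) → Prop}
    (hP : Tendsto (fun n => bernProb (p n) {ω | ¬ P n ω}) atTop (nhds 0))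
    (hQ : Tendsto (fun n => bernProb (p n) {ω | ¬ Q n ω}) atTop (nhds 0))
    (hR : Tendsto (fun n => bernProb (p n) {ω | ¬ R n ω}) atTop (nhds 0)) :
    Tendsto (fun n => bernProb (p n) {ω | P n ω ∧ Q n ω ∧ R n ω}) atTop (nhds 1) := by
  have hcompl : ∀ n, {ω | P n ω ∧ Q n ω ∧ R n ω}ᶜ
      ⊆ {ω | ¬ P n ω} ∪ ({ω | ¬ Q n ω} ∪ {ω | ¬ R n ω}) := fun n ω hω => by
    simp only [Set.mem_compl_iff, Set.mem_ofPred_eq, Set.mem_union] at hω ⊢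
    tauto
  have hbad : Tendsto (fun n => bernProb (p n) {ω | P n ω ∧ Q n ω ∧ R n ω}ᶜ) atTop (nhds 0) := by
    refine squeeze_zero (fun n => bernProb_nonneg (hp n).1 (hp n).2 _) (fun n => ?_)
      (by simpa using hP.add (hQ.add hR))
    obtain ⟨hp0, hp1⟩ := hp n
    refine (bernProb_mono hp0 hp1 (hcompl n)).trans ?_
    refine (bernProb_union_le hp0 hp1 _ _).trans (add_le_add le_rfl ?_)
    exact bernProb_union_le hp0 hp1 _ _
  simpa [bernProb_compl] using hbad.const_sub 1

theorem bounded_multiplicities_general (k : ℕ) (p : ℕ → ℝ)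
    (hp : ∀ n, 0 < p n ∧ p n < 1)
    (M : ℕ) (hM : 1 ≤ M)
    (h1 : Tendsto (fun n : ℕ =>
      (2 * (n : ℝ) - 1) ^ ((M + 1) * lk k + Lk k) * p n ^ M) atTop (nhds 0))
    (h2 : Tendsto (fun n : ℕ =>
      (2 * (n : ℝ) - 1) ^ (2 * lk k + M * Lk k) * p n ^ M) atTop (nhds 0))
    (h3 : Tendsto (fun n : ℕ =>
      (2 * (n : ℝ) - 1) ^ ((2 * M + 1) * lk k + M * Lk k) * p n ^ (2 * M)) atTop (nhds 0))
    (h4 : Tendsto (fun n : ℕ =>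
      (2 * (n : ℝ) - 1) ^ (3 * M * lk k + Lk k) * p n ^ (2 * M)) atTop (nhds 0))
    (h5 : Tendsto (fun n : ℕ =>
      (2 * (n : ℝ) - 1) ^ ((M + 1) * lk k + 2 * M * Lk k) * p n ^ (2 * M)) atTop (nhds 0)) :
    Tendsto (fun n : ℕ => cProb n k (p n)
      {ω | boundedMultiplicity M edge1 ω ∧ boundedMultiplicity M edge2 ω ∧
        boundedMultiplicity M edge3 ω})
      atTop (nhds 1) := by
  obtain ⟨m, rfl⟩ : ∃ m, M = m + 1 := ⟨M - 1, by omega⟩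
  have hp' : ∀ n, 0 ≤ p n ∧ p n ≤ 1 := fun n => ⟨(hp n).1.le, (hp n).2.le⟩
  have hedge1 := tendsto_bernProb_not_boundedMultiplicity hp' _ _ _
    (fun _ => CWord.injective_x_linv_z_y) (fun _ => CWord.length_x)
    (fun _ r => (length_linv _).trans r.length_z) (fun _ => CWord.length_y)
    h1 (le_of_eq (by ring)) h4 (le_of_eq (by ring)) h3 (le_of_eq (by ring))
  have hedge2 := tendsto_bernProb_not_boundedMultiplicity hp' _ _ _
    (fun _ => CWord.injective_y_linv_x_z) (fun _ => CWord.length_y)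
    (fun _ r => (length_linv _).trans r.length_x) (fun _ => CWord.length_z)
    h2 (le_of_eq (by ring)) h5 (le_of_eq (by ring)) h5 (le_of_eq (by ring))
  have hedge3 := tendsto_bernProb_not_boundedMultiplicity hp' _ _ _
    (fun _ => CWord.injective_z_linv_y_x) (fun _ => CWord.length_z)
    (fun _ r => (length_linv _).trans r.length_y) (fun _ => CWord.length_x)
    h1 (le_of_eq (by ring)) h3 (le_of_eq (by ring)) h4 (le_of_eq (by ring))
  simp only [cProb_eq_bernProb]
  exact tendsto_bernProb_and_and hp' hedge1 hedge2 hedge3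

/-- Fix `k ≥ 3`, and let `p = p(n)`. Suppose there exists `M ≥ 1` with
`(2n-1)^{(M+1)l_k + L_k} p^M → 0`, `(2n-1)^{2l_k + M L_k} p^M → 0`,
`(2n-1)^{(2M+1)l_k + M L_k} p^{2M} → 0`, `(2n-1)^{3M l_k + L_k} p^{2M} → 0` and
`(2n-1)^{(M+1)l_k + 2M L_k} p^{2M} → 0` as `n → ∞`. Then a.a.s. (as `n → ∞`), in each of the
multigraphs `Σ₁, Σ₂, Σ₃` associated to the binomial random set of relators `R ⊆ C(n,k)`, no
two vertices are joined by `M` or more edges and no vertex is joined by double edges to more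
than `M` distinct other vertices. -/
theorem bounded_multiplicities (k : ℕ) (hk : 3 ≤ k) (p : ℕ → ℝ)
    (hp : ∀ n, 0 < p n ∧ p n < 1)
    (M : ℕ) (hM : 1 ≤ M)
    (h1 : Tendsto (fun n : ℕ =>
      (2 * (n : ℝ) - 1) ^ ((M + 1) * lk k + Lk k) * p n ^ M) atTop (nhds 0))
    (h2 : Tendsto (fun n : ℕ =>
      (2 * (n : ℝ) - 1) ^ (2 * lk k + M * Lk k) * p n ^ M) atTop (nhds 0))
    (h3 : Tendsto (fun n : ℕ =>
      (2 * (n : ℝ) - 1) ^ ((2 * M + 1) * lk k + M * Lk k) * p n ^ (2 * M)) atTop (nhds 0))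
    (h4 : Tendsto (fun n : ℕ =>
      (2 * (n : ℝ) - 1) ^ (3 * M * lk k + Lk k) * p n ^ (2 * M)) atTop (nhds 0))
    (h5 : Tendsto (fun n : ℕ =>
      (2 * (n : ℝ) - 1) ^ ((M + 1) * lk k + 2 * M * Lk k) * p n ^ (2 * M)) atTop (nhds 0)) :
    Tendsto (fun n : ℕ => cProb n k (p n)
      {ω | boundedMultiplicity M edge1 ω ∧ boundedMultiplicity M edge2 ω ∧
        boundedMultiplicity M edge3 ω})
      atTop (nhds 1) :=
  bounded_multiplicities_general k p hp M hM h1 h2 h3 h4 h5
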